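/- Let Y be an integrable real random variable with CDF F and α ∈ (0,1). A point ŷ minimizes the expected pinball loss E[(1-α)(ŷ-Y)⁺ + α(Y-ŷ)⁺] if and only if P(Y ≤ ŷ) ≥ α and P(Y < ŷ) ≤ α (i.e., ŷ is an α-quantile of Y). -/

import Mathlib

open MeasureTheory

/-! The loss is `ρ(z, y) = (z - y)⁺ - α (z - y)`, so for `t ≤ z` the increment `ρ(z, y) - ρ(t, y)`
lies between `(z - t) (1{y ≤ t} - α)` and `(z - t) (1{y ≤ z} - α)`. Integrating, the risk does not
decrease to the right of `t` iff `α ≤ F t`, where `F` is the CDF of `Y` (the converse direction uses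
its right-continuity). The left half reduces to the right half under `Y ↦ -Y`, `α ↦ 1 - α`, which
leaves the loss invariant and turns `F t` into `1 - P(Y < t)`. -/

open Set

def pinballLoss (α z y : ℝ) : ℝ := (1 - α) * max (z - y) 0 + α * max (y - z) 0

lemma pinballLoss_eq (α z y : ℝ) : pinballLoss α z y = max (z - y) 0 - α * (z - y) := by
  rcases le_total y z with h | h
  · simp only [pinballLoss, max_eq_left (sub_nonneg.2 h), max_eq_right (sub_nonpos.2 h)]
    ring
  · simp only [pinballLoss, max_eq_right (sub_nonpos.2 h), max_eq_left (sub_nonneg.2 h)]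
    ring

lemma pinballLoss_neg (α z y : ℝ) : pinballLoss (1 - α) (-z) (-y) = pinballLoss α z y := by
  simp only [pinballLoss, sub_sub_cancel, neg_sub_neg]
  ring

lemma pinballLoss_sub_le {t z : ℝ} (α y : ℝ) (htz : t ≤ z) :
    pinballLoss α z y - pinballLoss α t y ≤ (z - t) * ((Iic z).indicator 1 y - α) := by
  rw [pinballLoss_eq, pinballLoss_eq]
  have ht0 := le_max_right (t - y) 0
  by_cases hz : y ≤ z
  · have : max (z - y) 0 ≤ max (t - y) 0 + (z - t) :=
      max_le (by linarith [le_max_left (t - y) 0]) (by linarith)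
    simp only [indicator_of_mem (mem_Iic.2 hz), Pi.one_apply]
    linarith
  · have : max (z - y) 0 = 0 := max_eq_right (by linarith)
    simp only [indicator_of_notMem (notMem_Iic.2 (not_le.1 hz))]
    linarith

lemma le_pinballLoss_sub {t z : ℝ} (α y : ℝ) (htz : t ≤ z) :
    (z - t) * ((Iic t).indicator 1 y - α) ≤ pinballLoss α z y - pinballLoss α t y := by
  rw [pinballLoss_eq, pinballLoss_eq]
  by_cases ht : y ≤ t
  · rw [max_eq_left (by linarith), max_eq_left (sub_nonneg.2 ht),
      indicator_of_mem (mem_Iic.2 ht), Pi.one_apply]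
    linarith
  · have : max (t - y) 0 = 0 := max_eq_right (by linarith)
    simp only [indicator_of_notMem (notMem_Iic.2 (not_le.1 ht))]
    linarith [le_max_right (z - y) 0]

namespace MeasureTheory

variable {Ω : Type*} [MeasurableSpace Ω] (μ : Measure Ω) (Y : Ω → ℝ)

noncomputable def pinballRisk (α z : ℝ) : ℝ := ∫ ω, pinballLoss α z (Y ω) ∂μ

lemma pinballRisk_neg (α z : ℝ) : pinballRisk μ (-Y) (1 - α) (-z) = pinballRisk μ Y α z := by
  simp only [pinballRisk, Pi.neg_apply, pinballLoss_neg]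

variable {μ Y}

lemma Integrable.pinballLoss [IsFiniteMeasure μ] (hY : Integrable Y μ) (α z : ℝ) :
    Integrable (fun ω ↦ pinballLoss α z (Y ω)) μ :=
  ((((integrable_const z).sub hY).pos_part).const_mul _).add
    (((hY.sub (integrable_const z)).pos_part).const_mul _)

lemma integral_indicator_one_comp (hY : AEMeasurable Y μ) {s : Set ℝ} (hs : MeasurableSet s) :
    ∫ ω, s.indicator 1 (Y ω) ∂μ = μ.real (Y ⁻¹' s) := by
  rw [← integral_map hY (measurable_one.indicator hs).aestronglyMeasurable,
    integral_indicator_one hs, map_measureReal_apply_of_aemeasurable hY hs]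

lemma integrable_indicator_one_comp [IsFiniteMeasure μ] (hY : AEMeasurable Y μ) {s : Set ℝ}
    (hs : MeasurableSet s) : Integrable (fun ω ↦ s.indicator (1 : ℝ → ℝ) (Y ω)) μ :=
  ((integrable_const (1 : ℝ)).indicator₀ (hY.nullMeasurableSet_preimage hs)).congr
    (.of_forall fun ω ↦ by by_cases h : Y ω ∈ s <;> simp [h])

variable [IsProbabilityMeasure μ]

lemma integral_mul_indicator_one_comp_sub (hY : AEMeasurable Y μ) {s : Set ℝ}
    (hs : MeasurableSet s) (c α : ℝ) :
    ∫ ω, c * (s.indicator 1 (Y ω) - α) ∂μ = c * (μ.real (Y ⁻¹' s) - α) := by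
  rw [integral_const_mul, integral_sub (integrable_indicator_one_comp hY hs) (integrable_const α),
    integral_indicator_one_comp hY hs, integral_const, probReal_univ, one_smul]

lemma pinballRisk_sub_le (hY : Integrable Y μ) {t z : ℝ} (α : ℝ) (htz : t ≤ z) :
    pinballRisk μ Y α z - pinballRisk μ Y α t ≤ (z - t) * (μ.real {ω | Y ω ≤ z} - α) := by
  have hind := integrable_indicator_one_comp hY.aemeasurable (measurableSet_Iic (a := z))
  calc pinballRisk μ Y α z - pinballRisk μ Y α t
      = ∫ ω, (pinballLoss α z (Y ω) - pinballLoss α t (Y ω)) ∂μ :=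
        (integral_sub (hY.pinballLoss α z) (hY.pinballLoss α t)).symm
    _ ≤ ∫ ω, (z - t) * ((Iic z).indicator 1 (Y ω) - α) ∂μ :=
        integral_mono ((hY.pinballLoss α z).sub (hY.pinballLoss α t))
          ((hind.sub (integrable_const α)).const_mul _) fun ω ↦ pinballLoss_sub_le α (Y ω) htz
    _ = (z - t) * (μ.real {ω | Y ω ≤ z} - α) :=
        integral_mul_indicator_one_comp_sub hY.aemeasurable measurableSet_Iic _ _

lemma le_pinballRisk_sub (hY : Integrable Y μ) {t z : ℝ} (α : ℝ) (htz : t ≤ z) :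
    (z - t) * (μ.real {ω | Y ω ≤ t} - α) ≤ pinballRisk μ Y α z - pinballRisk μ Y α t := by
  have hind := integrable_indicator_one_comp hY.aemeasurable (measurableSet_Iic (a := t))
  calc (z - t) * (μ.real {ω | Y ω ≤ t} - α)
      = ∫ ω, (z - t) * ((Iic t).indicator 1 (Y ω) - α) ∂μ :=
        (integral_mul_indicator_one_comp_sub hY.aemeasurable measurableSet_Iic _ _).symm
    _ ≤ ∫ ω, (pinballLoss α z (Y ω) - pinballLoss α t (Y ω)) ∂μ :=
        integral_mono ((hind.sub (integrable_const α)).const_mul _)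
          ((hY.pinballLoss α z).sub (hY.pinballLoss α t)) fun ω ↦ le_pinballLoss_sub α (Y ω) htz
    _ = pinballRisk μ Y α z - pinballRisk μ Y α t :=
        integral_sub (hY.pinballLoss α z) (hY.pinballLoss α t)

lemma le_measureReal_le_of_forall_gt (hY : AEMeasurable Y μ) {c t : ℝ}
    (h : ∀ z > t, c ≤ μ.real {ω | Y ω ≤ z}) : c ≤ μ.real {ω | Y ω ≤ t} := by
  have := Measure.isProbabilityMeasure_map hY
  have hF (z : ℝ) : ProbabilityTheory.cdf (μ.map Y) z = μ.real {ω | Y ω ≤ z} := by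
    rw [ProbabilityTheory.cdf_eq_real, map_measureReal_apply_of_aemeasurable hY measurableSet_Iic]
    rfl
  rw [← hF]
  refine ge_of_tendsto (((ProbabilityTheory.cdf _).right_continuous t).mono Ioi_subset_Ici_self)
    (eventually_nhdsWithin_of_forall fun z hz ↦ ?_)
  rw [hF]
  exact h z hz

lemma forall_ge_pinballRisk_le_iff (hY : Integrable Y μ) (α t : ℝ) :
    (∀ z, t ≤ z → pinballRisk μ Y α t ≤ pinballRisk μ Y α z) ↔ α ≤ μ.real {ω | Y ω ≤ t} := by
  refine ⟨fun hmin ↦ le_measureReal_le_of_forall_gt hY.aemeasurable fun z hz ↦ ?_,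
    fun hq z hz ↦ ?_⟩
  · nlinarith [hmin z hz.le, pinballRisk_sub_le hY α hz.le]
  · nlinarith [le_pinballRisk_sub hY α hz]

lemma forall_le_pinballRisk_le_iff (hY : Integrable Y μ) (α t : ℝ) :
    (∀ z, z ≤ t → pinballRisk μ Y α t ≤ pinballRisk μ Y α z) ↔ μ.real {ω | Y ω < t} ≤ α := by
  have hcompl : μ.real {ω | (-Y) ω ≤ -t} = 1 - μ.real {ω | Y ω < t} := by
    convert probReal_compl_eq_one_sub₀
      (hY.aemeasurable.nullMeasurableSet_preimage (measurableSet_Iio (a := t))) using 2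
    · ext ω
      simp
    · rfl
  have := forall_ge_pinballRisk_le_iff hY.neg (1 - α) (-t)
  rw [neg_surjective.forall, hcompl] at this
  simp only [neg_le_neg_iff, pinballRisk_neg] at this
  rw [this]
  constructor <;> intro h <;> linarith

end MeasureTheory

theorem pinball_min_iff_quantile_general
    {Ω : Type*} [MeasurableSpace Ω] (ℙ : Measure Ω) [IsProbabilityMeasure ℙ]
    (Y : Ω → ℝ) (hYint : Integrable Y ℙ)
    (α : ℝ) (yh : ℝ) :
    (∀ z : ℝ,
      ∫ ω, ((1 - α) * max (yh - Y ω) 0 + α * max (Y ω - yh) 0) ∂ℙ ≤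
      ∫ ω, ((1 - α) * max (z - Y ω) 0 + α * max (Y ω - z) 0) ∂ℙ) ↔
    (α ≤ (ℙ {ω | Y ω ≤ yh}).toReal ∧ (ℙ {ω | Y ω < yh}).toReal ≤ α) := by
  change (∀ z, pinballRisk ℙ Y α yh ≤ pinballRisk ℙ Y α z) ↔
    α ≤ ℙ.real {ω | Y ω ≤ yh} ∧ ℙ.real {ω | Y ω < yh} ≤ α
  rw [← forall_ge_pinballRisk_le_iff hYint, ← forall_le_pinballRisk_le_iff hYint]
  exact ⟨fun h ↦ ⟨fun z _ ↦ h z, fun z _ ↦ h z⟩,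
    fun ⟨hge, hle⟩ z ↦ (le_total yh z).elim (hge z) (hle z)⟩

/-- A point minimizes the expected pinball loss iff it is an α-quantile:
P(Y ≤ yh) ≥ α and P(Y < yh) ≤ α. -/
theorem pinball_min_iff_quantile
    {Ω : Type*} [MeasurableSpace Ω] (ℙ : Measure Ω) [IsProbabilityMeasure ℙ]
    (Y : Ω → ℝ) (hYm : Measurable Y) (hYint : Integrable Y ℙ)
    (α : ℝ) (hα : α ∈ Set.Ioo (0 : ℝ) 1) (yh : ℝ) :
    (∀ z : ℝ,
      ∫ ω, ((1 - α) * max (yh - Y ω) 0 + α * max (Y ω - yh) 0) ∂ℙ ≤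
      ∫ ω, ((1 - α) * max (z - Y ω) 0 + α * max (Y ω - z) 0) ∂ℙ) ↔
    (α ≤ (ℙ {ω | Y ω ≤ yh}).toReal ∧ (ℙ {ω | Y ω < yh}).toReal ≤ α) :=
  pinball_min_iff_quantile_general ℙ Y hYint α yh
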